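/- Let K be a convex body in ℝ² whose difference body polar (K−K)° contains the points ±(1,0), ±(0,1), ±(1,1) on its boundary. Let S₁ be the area of (K−K)° ∩ {x ≥ 0, x − y ≥ 0} (the sector between the rays through (1,0) and (1,1)). Then (1/(2S₁))·(1,0) ∈ K − K. -/

import Mathlib

open MeasureTheory Pointwise

noncomputable def polarSet {n : ℕ} (s : Set (EuclideanSpace ℝ (Fin n))) :
    Set (EuclideanSpace ℝ (Fin n)) := {x | ∀ y ∈ s, inner ℝ y x ≤ (1:ℝ)}

section Stmt14Aux

lemma inner2' (y x : EuclideanSpace ℝ (Fin 2)) : (inner ℝ y x : ℝ) = y 0 * x 0 + y 1 * x 1 := by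
  simp [PiLp.inner_apply, RCLike.inner_apply, Fin.sum_univ_two]; ring

lemma polar_convex' {n : ℕ} (Q : Set (EuclideanSpace ℝ (Fin n))) : Convex ℝ (polarSet Q) := by
  intro x hx z hz p r hp hr hpr
  intro y hy
  have hx' := hx y hy
  have hz' := hz y hy
  rw [inner_add_right, real_inner_smul_right, real_inner_smul_right]
  nlinarith

lemma polar_closed' {n : ℕ} (Q : Set (EuclideanSpace ℝ (Fin n))) : IsClosed (polarSet Q) := by
  have : polarSet Q = ⋂ y ∈ Q, {x : EuclideanSpace ℝ (Fin n) | inner ℝ y x ≤ (1:ℝ)} := by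
    ext x; simp [polarSet]
  rw [this]
  exact isClosed_biInter fun y _ =>
    isClosed_le (Continuous.inner continuous_const continuous_id) continuous_const

lemma zero_mem_polar' {n : ℕ} (Q : Set (EuclideanSpace ℝ (Fin n))) :
    (0 : EuclideanSpace ℝ (Fin n)) ∈ polarSet Q := by
  intro y _; rw [inner_zero_right]; norm_num

lemma support_exists' {n : ℕ} (Q : Set (EuclideanSpace ℝ (Fin n))) (hQc : IsCompact Q)
    (hQne : Q.Nonempty) (v : EuclideanSpace ℝ (Fin n)) (hv : v ∈ frontier (polarSet Q)) :
    ∃ y ∈ Q, (inner ℝ y v : ℝ) = 1 := by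
  have hvP : v ∈ polarSet Q := (polar_closed' Q).frontier_subset hv
  have hcont : Continuous fun y : EuclideanSpace ℝ (Fin n) => (inner ℝ y v : ℝ) :=
    Continuous.inner continuous_id continuous_const
  obtain ⟨y₀, hy₀Q, hy₀max⟩ := hQc.exists_isMaxOn hQne hcont.continuousOn
  refine ⟨y₀, hy₀Q, ?_⟩
  have hm1 : (inner ℝ y₀ v : ℝ) ≤ 1 := hvP y₀ hy₀Q
  by_contra hne
  have hmlt : (inner ℝ y₀ v : ℝ) < 1 := lt_of_le_of_ne hm1 hne
  obtain ⟨r, hr⟩ := hQc.isBounded.subset_ball 0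
  set R : ℝ := max r 1 with hR
  have hRpos : (0:ℝ) < R := lt_of_lt_of_le one_pos (le_max_right r 1)
  have hRbd : ∀ y ∈ Q, ‖y‖ ≤ R := by
    intro y hy
    have := hr hy
    rw [Metric.mem_ball, dist_zero_right] at this
    exact this.le.trans (le_max_left r 1)
  set m : ℝ := (inner ℝ y₀ v : ℝ) with hmdef
  set δ : ℝ := (1 - m)/R with hδ
  have hδpos : 0 < δ := div_pos (by linarith) hRpos
  have hball : Metric.ball v δ ⊆ polarSet Q := by
    intro w hw
    intro y hy
    have h1 : (inner ℝ y w : ℝ) = inner ℝ y v + inner ℝ y (w - v) := by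
      rw [← inner_add_right]; congr 1; abel
    have h2 : (inner ℝ y (w - v) : ℝ) ≤ ‖y‖ * ‖w - v‖ := real_inner_le_norm y (w - v)
    have h3 : ‖w - v‖ ≤ δ := by
      rw [← dist_eq_norm]; exact (Metric.mem_ball.1 hw).le
    have h4 : ‖y‖ * ‖w - v‖ ≤ R * δ :=
      mul_le_mul (hRbd y hy) h3 (norm_nonneg _) hRpos.le
    have h5 : R * δ = 1 - m := by rw [hδ]; field_simp [hRpos.ne']
    have h6 : (inner ℝ y v : ℝ) ≤ m := hy₀max hy
    linarith [h1 ▸ (by linarith : (inner ℝ y v : ℝ) + (inner ℝ y (w-v) : ℝ) ≤ 1)]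
  have : v ∈ interior (polarSet Q) :=
    mem_interior.2 ⟨Metric.ball v δ, hball, Metric.isOpen_ball, Metric.mem_ball_self hδpos⟩
  exact hv.2 this

lemma triangle_vol' (P : Set (EuclideanSpace ℝ (Fin 2))) (hP : Convex ℝ P)
    (h0 : (0 : EuclideanSpace ℝ (Fin 2)) ∈ P)
    (hm : (WithLp.toLp 2 ![0,-1] : EuclideanSpace ℝ (Fin 2)) ∈ P)
    (q : EuclideanSpace ℝ (Fin 2)) (hq : q ∈ P) (ha : 0 < q 0) (hb : q 1 ≤ q 0) :
    ENNReal.ofReal (q 0 / 2) ≤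
      volume (P ∩ {x : EuclideanSpace ℝ (Fin 2) | 0 ≤ x 0 ∧ 0 ≤ x 0 - x 1}) := by
  set m : EuclideanSpace ℝ (Fin 2) := WithLp.toLp 2 ![0,-1] with hmdef
  set a := q 0 with haq
  set b := q 1 with hbq
  set f : ℝ → ℝ := fun x => ((b+1)/a)*x - 1 with hf
  set g : ℝ → ℝ := fun x => (b/a)*x with hg
  set R2 : Set (ℝ × ℝ) := regionBetween f g (Set.Ioo 0 a) with hR2
  -- volume of R2
  have hvolR2 : (volume : Measure (ℝ × ℝ)) R2 = ENNReal.ofReal (a/2) := by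
    have hint1 : IntegrableOn f (Set.Ioo 0 a) volume :=
      (((continuous_const.mul continuous_id).sub continuous_const).integrableOn_Icc).mono_set
        Set.Ioo_subset_Icc_self
    have hint2 : IntegrableOn g (Set.Ioo 0 a) volume :=
      ((continuous_const.mul continuous_id).integrableOn_Icc).mono_set Set.Ioo_subset_Icc_self
    rw [hR2, Measure.volume_eq_prod, volume_regionBetween_eq_integral hint1 hint2 measurableSet_Ioo]
    · congr 1
      have h0' : ∀ y ∈ Set.Ioo (0:ℝ) a, (g - f) y = 1 - y/a := by
        intro y _; simp [hf, hg]; field_simp; ring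
      rw [MeasureTheory.setIntegral_congr_fun measurableSet_Ioo h0']
      rw [← MeasureTheory.integral_Ioc_eq_integral_Ioo, ← intervalIntegral.integral_of_le ha.le]
      have h1 : ∫ x in (0:ℝ)..a, (1 - x/a) = (∫ x in (0:ℝ)..a, (1:ℝ)) - (∫ x in (0:ℝ)..a, x)/a := by
        rw [← intervalIntegral.integral_div, ← intervalIntegral.integral_sub]
        · exact intervalIntegrable_const
        · exact (intervalIntegral.intervalIntegrable_id).div_const a
      rw [h1]; simp; field_simp; ring
    · intro x hx
      simp only [Set.mem_Ioo] at hx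
      have hd : (b+1)/a*x - b/a*x = x/a := by field_simp; ring
      have : x / a < 1 := (div_lt_one ha).2 hx.2
      simp only [hf, hg]; linarith
  have hR2meas : MeasurableSet R2 :=
    measurableSet_regionBetween ((measurable_const.mul measurable_id).sub measurable_const)
      (measurable_const.mul measurable_id) measurableSet_Ioo
  -- the preimage in E2
  set R : Set (EuclideanSpace ℝ (Fin 2)) := (fun x : EuclideanSpace ℝ (Fin 2) => (x 0, x 1)) ⁻¹' R2
    with hR
  have hMP : MeasurePreserving (fun x : EuclideanSpace ℝ (Fin 2) => (x 0, x 1)) volume volume :=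
    (volume_preserving_finTwoArrow ℝ).comp (EuclideanSpace.volume_preserving_symm_measurableEquiv_toLp (Fin 2))
  have hvolR : volume R = ENNReal.ofReal (a/2) := by
    rw [hR, hMP.measure_preimage hR2meas.nullMeasurableSet, hvolR2]
  -- R ⊆ P ∩ C
  have hsub : R ⊆ P ∩ {x : EuclideanSpace ℝ (Fin 2) | 0 ≤ x 0 ∧ 0 ≤ x 0 - x 1} := by
    intro x hx
    simp only [hR, Set.mem_preimage, hR2, regionBetween, Set.mem_setOf_eq, Set.mem_Ioo] at hx
    obtain ⟨⟨hu0, hua⟩, hfw, hwg⟩ := hx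
    set u := x 0
    set w := x 1
    have hane : a ≠ 0 := ne_of_gt ha
    have hgu : g u = (b/a)*u := rfl
    have hfu : f u = ((b+1)/a)*u - 1 := rfl
    rw [hgu] at hwg; rw [hfu] at hfw
    constructor
    · -- x ∈ P as convex combination
      set s : ℝ := (b/a)*u - w with hs
      set t : ℝ := u/a with ht
      have hs0 : 0 ≤ s := by simp [hs]; linarith
      have ht0 : 0 ≤ t := by positivity
      have hst : s + t ≤ 1 := by
        have : (b/a)*u + u/a = ((b+1)/a)*u := by field_simp
        simp only [hs, ht]; linarith
      have hx_eq : x = s • m + t • q + (1-s-t) • (0 : EuclideanSpace ℝ (Fin 2)) := by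
        ext i
        fin_cases i
        · show u = s * m 0 + t * a + (1-s-t) * 0
          simp [hmdef, ht]; field_simp
        · show w = s * m 1 + t * b + (1-s-t) * 0
          simp [hmdef, hs, ht]; field_simp; ring
      rw [hx_eq]
      have h1st : 0 ≤ 1 - s - t := by linarith
      have hsum : ∑ i : Fin 3, (![s, t, 1-s-t] : Fin 3 → ℝ) i •
          (![m, q, 0] : Fin 3 → EuclideanSpace ℝ (Fin 2)) i ∈ P := by
        apply hP.sum_mem
        · intro i _; fin_cases i <;> simp [hs0, ht0, h1st]
        · simp [Fin.sum_univ_three]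
        · intro i _; fin_cases i <;> simpa
      simpa [Fin.sum_univ_three] using hsum
    · -- x ∈ C
      have hba' : (b/a) * u ≤ u := by
        have : b/a ≤ 1 := (div_le_one ha).2 hb
        nlinarith
      exact ⟨hu0.le, by simp only [Set.mem_setOf_eq]; linarith⟩
  calc ENNReal.ofReal (a/2) = volume R := hvolR.symm
    _ ≤ _ := measure_mono hsub

end Stmt14Aux

theorem stmt14 (K : Set (EuclideanSpace ℝ (Fin 2)))
    (hconv : Convex ℝ K) (hcomp : IsCompact K) (hint : (interior K).Nonempty)
    (h1 : (WithLp.toLp 2 ![1, 0] : EuclideanSpace ℝ (Fin 2)) ∈ frontier (polarSet (K - K)))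
    (h1' : (WithLp.toLp 2 ![-1, 0] : EuclideanSpace ℝ (Fin 2)) ∈ frontier (polarSet (K - K)))
    (h2 : (WithLp.toLp 2 ![0, 1] : EuclideanSpace ℝ (Fin 2)) ∈ frontier (polarSet (K - K)))
    (h2' : (WithLp.toLp 2 ![0, -1] : EuclideanSpace ℝ (Fin 2)) ∈ frontier (polarSet (K - K)))
    (h3 : (WithLp.toLp 2 ![1, 1] : EuclideanSpace ℝ (Fin 2)) ∈ frontier (polarSet (K - K)))
    (h3' : (WithLp.toLp 2 ![-1, -1] : EuclideanSpace ℝ (Fin 2)) ∈ frontier (polarSet (K - K)))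
    (S₁ : ℝ)
    (hS₁ : S₁ = (volume (polarSet (K - K) ∩
        {x : EuclideanSpace ℝ (Fin 2) | 0 ≤ x 0 ∧ 0 ≤ x 0 - x 1})).toReal) :
    (1 / (2 * S₁)) • (WithLp.toLp 2 ![1, 0] : EuclideanSpace ℝ (Fin 2)) ∈ K - K := by
  classical
  have hKne : K.Nonempty := hint.mono interior_subset
  obtain ⟨k, hk⟩ := hKne
  have h0Q : (0 : EuclideanSpace ℝ (Fin 2)) ∈ K - K :=
    Set.mem_sub.2 ⟨k, hk, k, hk, sub_self k⟩
  have hQcomp : IsCompact (K - K) := by rw [sub_eq_add_neg]; exact hcomp.add hcomp.neg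
  have hQconv : Convex ℝ (K - K) := hconv.sub hconv
  have hQcl : IsClosed (K - K) := hQcomp.isClosed
  have hfr : frontier (polarSet (K - K)) ⊆ polarSet (K - K) :=
    (polar_closed' _).frontier_subset
  have hP1 : (WithLp.toLp 2 ![1,0] : EuclideanSpace ℝ (Fin 2)) ∈ polarSet (K - K) := hfr h1
  have hP2 : (WithLp.toLp 2 ![0,1] : EuclideanSpace ℝ (Fin 2)) ∈ polarSet (K - K) := hfr h2
  have hP2' : (WithLp.toLp 2 ![0,-1] : EuclideanSpace ℝ (Fin 2)) ∈ polarSet (K - K) := hfr h2'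
  have hP3 : (WithLp.toLp 2 ![1,1] : EuclideanSpace ℝ (Fin 2)) ∈ polarSet (K - K) := hfr h3
  by_cases hS0 : S₁ = 0
  · have hz : (1:ℝ)/(2*S₁) = 0 := by rw [hS0]; norm_num
    rw [hz, zero_smul]; exact h0Q
  have hvolne : volume (polarSet (K - K) ∩
      {x : EuclideanSpace ℝ (Fin 2) | 0 ≤ x 0 ∧ 0 ≤ x 0 - x 1}) ≠ ⊤ := by
    intro h
    rw [hS₁, h] at hS0
    simp at hS0
  have key : ∀ b' : ℝ, ENNReal.ofReal b' ≤ volume (polarSet (K - K) ∩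
      {x : EuclideanSpace ℝ (Fin 2) | 0 ≤ x 0 ∧ 0 ≤ x 0 - x 1}) → b' ≤ S₁ := by
    intro b' hb'
    rw [hS₁]
    exact (ENNReal.ofReal_le_iff_le_toReal hvolne).1 hb'
  have htri : ∀ q : EuclideanSpace ℝ (Fin 2), q ∈ polarSet (K - K) → 0 < q 0 → q 1 ≤ q 0 →
      q 0 / 2 ≤ S₁ := fun q hq ha hb =>
    key _ (triangle_vol' _ (polar_convex' _) (zero_mem_polar' _) hP2' q hq ha hb)
  have hS12 : 1/2 ≤ S₁ := by
    have h := htri (WithLp.toLp 2 ![1,0]) hP1 (by norm_num) (by norm_num)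
    simpa using h
  have hSpos : 0 < S₁ := by linarith
  have hmain : ∀ p ∈ polarSet (K - K), p 0 ≤ 2 * S₁ := by
    intro p hp
    rcases le_or_gt (p 1) 0 with hb | hb
    · obtain ⟨y, hyQ, hy⟩ := support_exists' (K - K) hQcomp ⟨0, h0Q⟩ _ h1
      rw [inner2'] at hy; simp at hy
      have h11 : (inner ℝ y (WithLp.toLp 2 ![1,1] : EuclideanSpace ℝ (Fin 2)) : ℝ) ≤ 1 := hP3 y hyQ
      rw [inner2'] at h11; simp at h11
      have hyp : (inner ℝ y p : ℝ) ≤ 1 := hp y hyQ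
      rw [inner2'] at hyp
      nlinarith [mul_nonneg (by linarith : (0:ℝ) ≤ -(y 1)) (by linarith : (0:ℝ) ≤ -(p 1))]
    · rcases le_or_gt (p 0) (p 1) with hba | hba
      · obtain ⟨y, hyQ, hy⟩ := support_exists' (K - K) hQcomp ⟨0, h0Q⟩ _ h3
        rw [inner2'] at hy; simp at hy
        have ha1 : (inner ℝ y (WithLp.toLp 2 ![1,0] : EuclideanSpace ℝ (Fin 2)) : ℝ) ≤ 1 := hP1 y hyQ
        rw [inner2'] at ha1; simp at ha1
        have ha2 : (inner ℝ y (WithLp.toLp 2 ![0,1] : EuclideanSpace ℝ (Fin 2)) : ℝ) ≤ 1 := hP2 y hyQ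
        rw [inner2'] at ha2; simp at ha2
        have hyp : (inner ℝ y p : ℝ) ≤ 1 := hp y hyQ
        rw [inner2'] at hyp
        nlinarith [mul_le_mul_of_nonneg_left hba (by linarith : (0:ℝ) ≤ y 1)]
      · have := htri p hp (lt_trans hb hba) hba.le
        linarith
  -- bipolar step
  by_contra hx
  obtain ⟨f, u, hfQ, hfx⟩ := geometric_hahn_banach_closed_point hQconv hQcl hx
  have hu : 0 < u := by have := hfQ 0 h0Q; simpa using this
  set v := (InnerProductSpace.toDual ℝ (EuclideanSpace ℝ (Fin 2))).symm f with hv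
  have hvw : ∀ w, (inner ℝ v w : ℝ) = f w := fun w => InnerProductSpace.toDual_symm_apply
  have hv'P : u⁻¹ • v ∈ polarSet (K - K) := by
    intro y hy
    rw [real_inner_smul_right, real_inner_comm, hvw]
    have := hfQ y hy
    rw [inv_mul_le_iff₀ hu]
    linarith
  have hgt : 1 < (inner ℝ (u⁻¹ • v) ((1 / (2 * S₁)) • (WithLp.toLp 2 ![1, 0] : EuclideanSpace ℝ (Fin 2))) : ℝ) := by
    rw [real_inner_smul_left, hvw]
    rw [lt_inv_mul_iff₀ hu]
    linarith
  have hle : (inner ℝ (u⁻¹ • v) ((1 / (2 * S₁)) • (WithLp.toLp 2 ![1, 0] : EuclideanSpace ℝ (Fin 2))) : ℝ) ≤ 1 := by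
    rw [real_inner_smul_right, inner2']
    have hb := hmain _ hv'P
    have h10 : ((WithLp.toLp 2 ![1,0] : EuclideanSpace ℝ (Fin 2)) 0 : ℝ) = 1 := by norm_num
    have h11 : ((WithLp.toLp 2 ![1,0] : EuclideanSpace ℝ (Fin 2)) 1 : ℝ) = 0 := by norm_num
    rw [h10, h11]
    rw [mul_one, mul_zero, add_zero]
    rw [div_mul_eq_mul_div, one_mul, div_le_one (by linarith)]
    exact hb
  linarith
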